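/- [Lemma 4.5(ii), algebraic form] Let (P_S) be a decomposition of Ω ∈ Λ and let ε ∈ {0,1}ⁿ be such that, for each i, every monomial occurring in Ω with nonzero coefficient has x_i-exponent ≡ ε_i (mod 2). Then for every even-cardinality subset S and each i ∈ {1,…,n}, every monomial occurring in P_S with nonzero coefficient has z_i-exponent ≡ ε_i (mod 2) if i ∉ S, and ≡ ε_i + 1 (mod 2) if i ∈ S. -/

import Mathlib

noncomputable section

/-- The Laurent polynomial ring `Λ = ℚ[x₁^{±1},…,x_n^{±1}]`. -/
abbrev Lam (n : ℕ) : Type := AddMonoidAlgebra ℚ (Fin n →₀ ℤ)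

/-- The variable `x_i ∈ Λ`. -/
def Xv {n : ℕ} (i : Fin n) : Lam n :=
  AddMonoidAlgebra.single (Finsupp.single i 1) 1

/-- The bracket `{f} := f + σ(f)`. -/
def bracket {n : ℕ} (σ : Lam n →+* Lam n) (f : Lam n) : Lam n := f + σ f

/-- `σ` is the ring endomorphism of `Λ` determined by `σ(x_i) = −x_i⁻¹`,
i.e. `σ(x_i)·x_i = −1` for all `i`. -/
def IsSigma {n : ℕ} (σ : Lam n →+* Lam n) : Prop :=
  ∀ i : Fin n, σ (Xv i) * Xv i = -1

/-- The exponent vector of the alternating monomial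
`M_S = x_{i₁} x_{i₂}⁻¹ ⋯ x_{i_{2k-1}} x_{i_{2k}}⁻¹`, where `S = {i₁ < ⋯ < i_{2k}}`. -/
def expS {n : ℕ} (S : Finset (Fin n)) : Fin n →₀ ℤ :=
  (((S.sort (· ≤ ·)).zipIdx).map fun p => Finsupp.single p.1 ((-1 : ℤ) ^ p.2)).sum

/-- The alternating monomial `M_S ∈ Λ`. -/
def MS {n : ℕ} (S : Finset (Fin n)) : Lam n :=
  AddMonoidAlgebra.single (expS S) 1

/-- Evaluation of a polynomial `P ∈ ℚ[z₁,…,z_n]` at `z_i = {x_i}`. -/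
def evalBr {n : ℕ} (σ : Lam n →+* Lam n) (P : MvPolynomial (Fin n) ℚ) : Lam n :=
  MvPolynomial.aeval (fun i => bracket σ (Xv i)) P

/-- A decomposition (4) of `Ω`: `Ω = Σ_S {M_S}·P_S({x₁},…,{x_n})`,
the sum being over the even-cardinality subsets `S` of the set of variables. -/
def IsDecomposition {n : ℕ} (σ : Lam n →+* Lam n) (Ω : Lam n)
    (P : Finset (Fin n) → MvPolynomial (Fin n) ℚ) : Prop :=
  Ω = ∑ S ∈ Finset.univ.filter (fun S : Finset (Fin n) => Even S.card),
        bracket σ (MS S) * evalBr σ (P S)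


/-!
The decomposition is unique. Let `x_i` act on `ℚ[z₁,…,z_n]^{2ⁿ}` through the matrix
`C_i = [[z_i, 1], [1, 0]]` in the `i`-th tensor factor; since `C_i - C_i⁻¹ = z_i`, every
`P({x₁},…,{x_n})` acts as the scalar `P(z)`. The entry `(0, 1_T)` of the image of `{M_S}` is `2`
for `S = T` and `0` unless `T ⊆ S`, so the `P_T` are recovered by downward induction on `T`.

The substitution `x_i ↦ -x_i` multiplies `{M_S}` by `(-1)^{[i ∈ S]}`, sends `{x_i}` to `-{x_i}`,
fixes the other `{x_j}`, and multiplies `Ω` by `(-1)^{ε_i}`. Hence the image of `Ω` has two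
decompositions, and uniqueness gives `P_S(…, -z_i, …) = (-1)^{ε_i + [i ∈ S]} P_S`.
-/

namespace AddMonoidAlgebra

variable {k G : Type*} [CommSemiring k] [AddMonoid G]

def twist (χ : Multiplicative G →* k) : AddMonoidAlgebra k G →ₐ[k] AddMonoidAlgebra k G :=
  lift k (AddMonoidAlgebra k G) G
    { toFun := fun a => single a.toAdd (χ a)
      map_one' := by rw [toAdd_one, map_one, one_def]
      map_mul' := fun a b => by rw [toAdd_mul, map_mul, single_mul_single] }

theorem twist_single (χ : Multiplicative G →* k) (a : G) (c : k) :
    twist χ (single a c) = single a (χ (.ofAdd a) * c) := by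
  rw [twist, lift_single, MonoidHom.coe_mk, OneHom.coe_mk, toAdd_ofAdd, smul_single,
    smul_eq_mul, mul_comm]

theorem coeff_twist (χ : Multiplicative G →* k) (f : AddMonoidAlgebra k G) (a : G) :
    (twist χ f).coeff a = χ (.ofAdd a) * f.coeff a := by
  classical
  induction f using induction_linear with
  | zero => simp
  | add f g hf hg => simp [hf, hg, mul_add]
  | single b c =>
    rw [twist_single]
    simp only [coeff_single, Finsupp.single_apply]
    split_ifs with h <;> simp [h]

theorem twist_eq_smul {χ : Multiplicative G →* k} {f : AddMonoidAlgebra k G} {c : k}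
    (h : ∀ a ∈ f.coeff.support, χ (.ofAdd a) = c) : twist χ f = c • f := by
  ext a
  rw [coeff_twist, coeff_smul, Finsupp.smul_apply, smul_eq_mul]
  by_cases ha : a ∈ f.coeff.support
  · rw [h a ha]
  · rw [Finsupp.notMem_support_iff.1 ha, mul_zero, mul_zero]

end AddMonoidAlgebra

def negOnePowChar {G : Type*} [AddMonoid G] (φ : G →+ ℤ) : Multiplicative G →* ℚ where
  toFun a := ((φ a.toAdd).negOnePow : ℤ)
  map_one' := by simp
  map_mul' a b := by simp [Int.negOnePow_add]

theorem negOnePowChar_apply {G : Type*} [AddMonoid G] (φ : G →+ ℤ) (a : G) :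
    negOnePowChar φ (.ofAdd a) = ((φ a).negOnePow : ℤ) := rfl

theorem Int.negOnePow_eq_negOnePow_iff_cast_zmod_two (a b : ℤ) :
    a.negOnePow = b.negOnePow ↔ (a : ZMod 2) = b := by
  rw [Int.negOnePow_eq_iff, ZMod.intCast_eq_intCast_iff_dvd_sub, even_iff_two_dvd, ← dvd_neg,
    neg_sub]
  rfl

theorem List.sum_map_zipIdx_single_apply {α : Type*} [DecidableEq α] {l : List α} (hl : l.Nodup)
    (k : ℕ) (i : α) :
    ((l.zipIdx k).map fun p => Finsupp.single p.1 ((-1 : ℤ) ^ p.2)).sum i =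
      if i ∈ l then (-1) ^ (k + l.idxOf i) else 0 := by
  induction l generalizing k with
  | nil => simp
  | cons a l ih =>
    obtain ⟨ha, hl⟩ := List.nodup_cons.1 hl
    rw [List.zipIdx_cons, List.map_cons, List.sum_cons, Finsupp.add_apply, ih hl]
    by_cases hia : i = a
    · subst hia
      simp [ha]
    · simp [hia, Ne.symm hia, add_assoc, add_comm 1]

namespace Matrix

variable {ι α R : Type*} [Fintype ι] [CommSemiring R]

def kroneckerPi (A : ι → Matrix α α R) : Matrix (ι → α) (ι → α) R :=
  of fun u v => ∏ i, A i (u i) (v i)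

theorem kroneckerPi_apply (A : ι → Matrix α α R) (u v : ι → α) :
    kroneckerPi A u v = ∏ i, A i (u i) (v i) := rfl

theorem kroneckerPi_mul [DecidableEq ι] [Fintype α] (A B : ι → Matrix α α R) :
    kroneckerPi A * kroneckerPi B = kroneckerPi (A * B) := by
  ext u v
  simp only [mul_apply, kroneckerPi_apply, Pi.mul_apply, Fintype.prod_sum, Finset.prod_mul_distrib]

theorem kroneckerPi_one [DecidableEq α] : kroneckerPi (1 : ι → Matrix α α R) = 1 := by
  ext u v
  rw [kroneckerPi_apply, one_apply]
  split_ifs with h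
  · subst h; simp
  · obtain ⟨i, hi⟩ := Function.ne_iff.1 h
    exact Finset.prod_eq_zero (Finset.mem_univ i) (by simp [hi])

theorem kroneckerPi_update_apply [DecidableEq ι] (A : ι → Matrix α α R) (i : ι)
    (B : Matrix α α R) (u v : ι → α) :
    kroneckerPi (Function.update A i B) u v =
      B (u i) (v i) * ∏ j ∈ {i}ᶜ, A j (u j) (v j) := by
  rw [kroneckerPi_apply, Fintype.prod_eq_mul_prod_compl i, Function.update_self]
  congr 1
  exact Finset.prod_congr rfl fun j hj => by
    rw [Function.update_of_ne (by simpa using hj)]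

end Matrix

def companionUnit {R : Type*} [CommRing R] (y : R) : (Matrix (Fin 2) (Fin 2) R)ˣ where
  val := !![y, 1; 1, 0]
  inv := !![0, 1; 1, -y]
  val_inv := by ext i j; fin_cases i <;> fin_cases j <;> simp [Matrix.mul_apply, Fin.sum_univ_two]
  inv_val := by ext i j; fin_cases i <;> fin_cases j <;> simp [Matrix.mul_apply, Fin.sum_univ_two]

theorem companionUnit_sub_inv {R : Type*} [CommRing R] (y : R) :
    (companionUnit y : Matrix (Fin 2) (Fin 2) R) - ↑(companionUnit y)⁻¹ = y • 1 := by
  ext i j; fin_cases i <;> fin_cases j <;> simp [companionUnit]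

section Laurent

open AddMonoidAlgebra

variable {n : ℕ} {σ : Lam n →+* Lam n}

theorem Lam.ringHom_ext {R : Type*} [Semiring R] {f g : Lam n →+* R}
    (h : ∀ i, f (Xv i) = g (Xv i)) : f = g :=
  ringHom_ext' (RingHom.ext_rat _ _) (Finsupp.mulHom_ext' fun i => MonoidHom.ext_mint (h i))

theorem Xv_mul_single_neg (i : Fin n) : Xv i * single (-Finsupp.single i 1) 1 = 1 := by
  rw [Xv, single_mul_single, add_neg_cancel, mul_one, one_def]

theorem IsSigma.apply_Xv (hσ : IsSigma σ) (i : Fin n) :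
    σ (Xv i) = -single (-Finsupp.single i 1) 1 := by
  calc σ (Xv i) = σ (Xv i) * Xv i * single (-Finsupp.single i 1) 1 := by
        rw [mul_assoc, Xv_mul_single_neg, mul_one]
    _ = _ := by rw [hσ i, neg_one_mul]

theorem IsSigma.apply_single (hσ : IsSigma σ) (a : Fin n →₀ ℤ) (c : ℚ) :
    σ (single a c) = single (-a) (((∑ i, a i).negOnePow : ℤ) * c) := by
  have hσ_eq : σ = (mapDomainRingHom ℚ negAddMonoidHom).comp
      (twist (negOnePowChar (∑ i : Fin n, Finsupp.applyAddHom i))).toRingHom := by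
    refine Lam.ringHom_ext fun i => ?_
    rw [hσ.apply_Xv, RingHom.comp_apply, AlgHom.toRingHom_eq_coe, AlgHom.coe_toRingHom, Xv,
      twist_single, mapDomainRingHom_apply, mapDomain_single, negOnePowChar_apply]
    simp
  rw [hσ_eq]
  simp [twist_single, negOnePowChar_apply]

theorem IsSigma.bracket_single (hσ : IsSigma σ) (a : Fin n →₀ ℤ) :
    bracket σ (single a 1) = single a 1 + single (-a) (((∑ i, a i).negOnePow : ℤ) : ℚ) := by
  rw [bracket, hσ.apply_single, mul_one]

theorem expS_apply (S : Finset (Fin n)) (i : Fin n) :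
    expS S i = if i ∈ S then (-1) ^ ((S.sort (· ≤ ·)).idxOf i) else 0 := by
  rw [expS, List.sum_map_zipIdx_single_apply (S.sort_nodup _)]
  simp only [Finset.mem_sort, zero_add]

theorem expS_apply_of_notMem {S : Finset (Fin n)} {i : Fin n} (hi : i ∉ S) : expS S i = 0 := by
  rw [expS_apply, if_neg hi]

theorem expS_apply_of_mem {S : Finset (Fin n)} {i : Fin n} (hi : i ∈ S) :
    expS S i = 1 ∨ expS S i = -1 := by
  rw [expS_apply, if_pos hi]
  exact neg_one_pow_eq_or ℤ _

theorem intCast_expS_apply (S : Finset (Fin n)) (i : Fin n) :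
    ((expS S i : ℤ) : ZMod 2) = if i ∈ S then 1 else 0 := by
  by_cases hi : i ∈ S
  · rcases expS_apply_of_mem hi with h | h <;> simp [h, hi]
  · simp [expS_apply_of_notMem hi, hi]

theorem IsSigma.bracket_MS (hσ : IsSigma σ) {S : Finset (Fin n)} (hS : Even S.card) :
    bracket σ (MS S) = single (expS S) 1 + single (-expS S) 1 := by
  have hsign : (∑ i, expS S i).negOnePow = 1 := by
    rw [← Int.negOnePow_even _ ((Int.even_coe_nat _).2 hS),
      Int.negOnePow_eq_negOnePow_iff_cast_zmod_two]
    push_cast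
    simp [intCast_expS_apply]
  rw [MS, hσ.bracket_single, hsign, Units.val_one, Int.cast_one]

/-- The substitution `x_i ↦ -x_i`. -/
def negX (i : Fin n) : Lam n →ₐ[ℚ] Lam n := twist (negOnePowChar (Finsupp.applyAddHom i))

/-- The substitution `z_i ↦ -z_i`. -/
def negZ (i : Fin n) : MvPolynomial (Fin n) ℚ →ₐ[ℚ] MvPolynomial (Fin n) ℚ :=
  twist (negOnePowChar ((Nat.castAddMonoidHom ℤ).comp (Finsupp.applyAddHom i)))

theorem negX_single (i : Fin n) (a : Fin n →₀ ℤ) (c : ℚ) :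
    negX i (single a c) = (((a i).negOnePow : ℤ) : ℚ) • single a c := by
  rw [negX, twist_single, negOnePowChar_apply, smul_single, smul_eq_mul]
  rfl

theorem negZ_X (i j : Fin n) :
    negZ i (MvPolynomial.X j) =
      ((((Finsupp.single j 1 : Fin n →₀ ℕ) i : ℤ).negOnePow : ℤ) : ℚ) •
        MvPolynomial.X j := by
  rw [negZ, MvPolynomial.X, MvPolynomial.monomial, lsingle_apply, twist_single, smul_single,
    smul_eq_mul]
  rfl

theorem coeff_negZ (i : Fin n) (p : MvPolynomial (Fin n) ℚ) (d : Fin n →₀ ℕ) :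
    (negZ i p).coeff d = (((d i : ℤ).negOnePow : ℤ) : ℚ) * p.coeff d :=
  coeff_twist _ p d

theorem IsSigma.negX_bracket_single (hσ : IsSigma σ) (i : Fin n) (a : Fin n →₀ ℤ) :
    negX i (bracket σ (single a 1)) =
      (((a i).negOnePow : ℤ) : ℚ) • bracket σ (single a 1) := by
  rw [hσ.bracket_single, map_add, negX_single, negX_single, Finsupp.neg_apply, Int.negOnePow_neg,
    smul_add]

theorem IsSigma.negX_evalBr (hσ : IsSigma σ) (i : Fin n) (p : MvPolynomial (Fin n) ℚ) :
    negX i (evalBr σ p) = evalBr σ (negZ i p) := by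
  have : (negX i).comp (MvPolynomial.aeval fun j => bracket σ (Xv j)) =
      (MvPolynomial.aeval fun j => bracket σ (Xv j)).comp (negZ i) := by
    refine MvPolynomial.algHom_ext fun j => ?_
    rw [AlgHom.comp_apply, AlgHom.comp_apply, MvPolynomial.aeval_X, negZ_X, map_smul,
      MvPolynomial.aeval_X, Xv, hσ.negX_bracket_single]
    simp [Finsupp.single_apply]
  exact DFunLike.congr_fun this p

def companion (i : Fin n) : (Matrix (Fin 2) (Fin 2) (MvPolynomial (Fin n) ℚ))ˣ :=
  companionUnit (MvPolynomial.X i)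

open Matrix in
def laurentRep :
    Lam n →ₐ[ℚ] Matrix (Fin n → Fin 2) (Fin n → Fin 2) (MvPolynomial (Fin n) ℚ) :=
  lift ℚ _ _
    { toFun := fun a => kroneckerPi fun i => ↑(companion i ^ a.toAdd i)
      map_one' := by
        simp only [toAdd_one, Finsupp.coe_zero, Pi.zero_apply, zpow_zero, Units.val_one]
        exact kroneckerPi_one
      map_mul' := fun a b => by
        simp only [toAdd_mul, Finsupp.coe_add, Pi.add_apply, _root_.zpow_add, Units.val_mul,
          kroneckerPi_mul]
        rfl }

theorem laurentRep_single (a : Fin n →₀ ℤ) (c : ℚ) :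
    laurentRep (single a c) = c • Matrix.kroneckerPi fun i => ↑(companion i ^ a i) := by
  rw [laurentRep, lift_single]
  rfl

theorem laurentRep_Xv_sub_inv (i : Fin n) :
    laurentRep (Xv i - single (-Finsupp.single i 1) 1) =
      algebraMap _ _ (MvPolynomial.X i : MvPolynomial (Fin n) ℚ) := by
  have hfun : ∀ k : ℤ, (fun j => (↑(companion j ^ (Finsupp.single i k : Fin n →₀ ℤ) j) :
      Matrix (Fin 2) (Fin 2) (MvPolynomial (Fin n) ℚ))) =
        Function.update (1 : Fin n → Matrix (Fin 2) (Fin 2) (MvPolynomial (Fin n) ℚ)) i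
          ↑(companion i ^ k) := by
    intro k
    funext j
    by_cases hj : j = i
    · subst hj; simp
    · simp [hj, Finsupp.single_eq_of_ne' (Ne.symm hj)]
  refine Matrix.ext fun u v => ?_
  rw [Xv, map_sub, laurentRep_single, laurentRep_single, ← Finsupp.single_neg, hfun, hfun,
    one_smul, one_smul, Matrix.sub_apply, Matrix.kroneckerPi_update_apply,
    Matrix.kroneckerPi_update_apply, ← sub_mul, zpow_one, zpow_neg_one, ← Matrix.sub_apply,
    companion, companionUnit_sub_inv, Algebra.algebraMap_eq_smul_one, Matrix.smul_apply,
    Matrix.smul_apply, smul_eq_mul, smul_eq_mul, mul_assoc, ← Matrix.kroneckerPi_one,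
    Matrix.kroneckerPi_apply, Fintype.prod_eq_mul_prod_compl i]
  rfl

theorem IsSigma.laurentRep_evalBr (hσ : IsSigma σ) (p : MvPolynomial (Fin n) ℚ) :
    laurentRep (evalBr σ p) = algebraMap _ _ p := by
  have : laurentRep.comp (MvPolynomial.aeval fun j => bracket σ (Xv j)) =
      IsScalarTower.toAlgHom ℚ _ _ := by
    refine MvPolynomial.algHom_ext fun j => ?_
    rw [AlgHom.comp_apply, MvPolynomial.aeval_X, bracket, hσ.apply_Xv, ← sub_eq_add_neg,
      laurentRep_Xv_sub_inv, IsScalarTower.coe_toAlgHom']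
  exact DFunLike.congr_fun this p

def onesOn (T : Finset (Fin n)) : Fin n → Fin 2 := fun j => if j ∈ T then 1 else 0

theorem laurentRep_single_apply_eq_zero {a : Fin n →₀ ℤ} {T : Finset (Fin n)} {i : Fin n}
    (hi : i ∈ T) (ha : a i = 0) (c : ℚ) : laurentRep (single a c) 0 (onesOn T) = 0 := by
  rw [laurentRep_single, Matrix.smul_apply, Matrix.kroneckerPi_apply,
    Finset.prod_eq_zero (Finset.mem_univ i), smul_zero]
  simp [ha, onesOn, hi]

theorem laurentRep_single_apply_eq_one {a : Fin n →₀ ℤ} {T : Finset (Fin n)}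
    (hmem : ∀ i ∈ T, a i = 1 ∨ a i = -1) (hnotMem : ∀ i ∉ T, a i = 0) :
    laurentRep (single a 1) 0 (onesOn T) = 1 := by
  rw [laurentRep_single, one_smul, Matrix.kroneckerPi_apply]
  refine Finset.prod_eq_one fun i _ => ?_
  by_cases hi : i ∈ T
  · rcases hmem i hi with h | h <;> simp [h, hi, onesOn, companion, companionUnit]
  · simp [hnotMem i hi, hi, onesOn]

theorem IsSigma.laurentRep_bracket_MS_apply_self (hσ : IsSigma σ) {S : Finset (Fin n)}
    (hS : Even S.card) : laurentRep (bracket σ (MS S)) 0 (onesOn S) = 2 := by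
  rw [hσ.bracket_MS hS, map_add, Matrix.add_apply,
    laurentRep_single_apply_eq_one (fun i => expS_apply_of_mem) (fun i => expS_apply_of_notMem),
    laurentRep_single_apply_eq_one
      (fun i hi => by rcases expS_apply_of_mem hi with h | h <;> simp [h])
      (fun i hi => by simpa using expS_apply_of_notMem hi)]
  norm_num

theorem IsSigma.laurentRep_bracket_MS_apply_of_not_subset (hσ : IsSigma σ)
    {S T : Finset (Fin n)} (hTS : ¬T ⊆ S) : laurentRep (bracket σ (MS S)) 0 (onesOn T) = 0 := by
  obtain ⟨i, hiT, hiS⟩ := Finset.not_subset.1 hTS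
  rw [MS, hσ.bracket_single, map_add, Matrix.add_apply,
    laurentRep_single_apply_eq_zero hiT (expS_apply_of_notMem hiS),
    laurentRep_single_apply_eq_zero hiT (by simp [expS_apply_of_notMem hiS]), add_zero]

theorem IsSigma.eq_zero_of_isDecomposition_zero (hσ : IsSigma σ)
    {Q : Finset (Fin n) → MvPolynomial (Fin n) ℚ} (hQ : IsDecomposition σ 0 Q)
    {T : Finset (Fin n)} (hT : Even T.card) : Q T = 0 := by
  induction T using WellFoundedGT.induction with
  | _ T ih =>
  have key := congrArg (fun M => laurentRep M 0 (onesOn T)) hQ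
  simp only [map_zero, Matrix.zero_apply, map_sum, Matrix.sum_apply, map_mul,
    hσ.laurentRep_evalBr, ← Algebra.commutes, ← Algebra.smul_def, Matrix.smul_apply,
    smul_eq_mul] at key
  rw [Finset.sum_eq_single_of_mem T (by simpa using hT) ?_,
    hσ.laurentRep_bracket_MS_apply_self hT] at key
  · exact (mul_eq_zero.1 key.symm).resolve_right two_ne_zero
  · intro S hS hST
    by_cases hTS : T ⊆ S
    · rw [ih S (lt_of_le_of_ne hTS (Ne.symm hST)) (by simpa using hS), zero_mul]
    · rw [hσ.laurentRep_bracket_MS_apply_of_not_subset hTS, mul_zero]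

theorem IsDecomposition.sub {Ω Ω' : Lam n} {P Q : Finset (Fin n) → MvPolynomial (Fin n) ℚ}
    (hP : IsDecomposition σ Ω P) (hQ : IsDecomposition σ Ω' Q) :
    IsDecomposition σ (Ω - Ω') (P - Q) := by
  rw [IsDecomposition, hP, hQ, ← Finset.sum_sub_distrib]
  simp only [evalBr, Pi.sub_apply, map_sub, mul_sub]

theorem IsDecomposition.smul {Ω : Lam n} {P : Finset (Fin n) → MvPolynomial (Fin n) ℚ}
    (hP : IsDecomposition σ Ω P) (c : ℚ) : IsDecomposition σ (c • Ω) (c • P) := by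
  rw [IsDecomposition, hP, Finset.smul_sum]
  simp only [evalBr, Pi.smul_apply, map_smul, mul_smul_comm]

theorem IsSigma.isDecomposition_unique (hσ : IsSigma σ) {Ω : Lam n}
    {P Q : Finset (Fin n) → MvPolynomial (Fin n) ℚ} (hP : IsDecomposition σ Ω P)
    (hQ : IsDecomposition σ Ω Q) {S : Finset (Fin n)} (hS : Even S.card) : P S = Q S :=
  sub_eq_zero.1 (hσ.eq_zero_of_isDecomposition_zero (sub_self Ω ▸ hP.sub hQ) hS)

theorem IsSigma.isDecomposition_negX (hσ : IsSigma σ) {Ω : Lam n}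
    {P : Finset (Fin n) → MvPolynomial (Fin n) ℚ} (hP : IsDecomposition σ Ω P) (i : Fin n) :
    IsDecomposition σ (negX i Ω)
      fun S => (((expS S i).negOnePow : ℤ) : ℚ) • negZ i (P S) := by
  rw [IsDecomposition, hP, map_sum]
  refine Finset.sum_congr rfl fun S _ => ?_
  rw [map_mul, hσ.negX_evalBr, MS, hσ.negX_bracket_single, evalBr, evalBr, map_smul,
    smul_mul_assoc, mul_smul_comm]

end Laurent

theorem decomposition_exponent_parity_general (n : ℕ)
    (σ : Lam n →+* Lam n) (hσ : IsSigma σ)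
    (Ω : Lam n) (P : Finset (Fin n) → MvPolynomial (Fin n) ℚ)
    (hP : IsDecomposition σ Ω P) (ε : Fin n → ZMod 2)
    (hΩ : ∀ a : Fin n →₀ ℤ, (Ω.coeff : (Fin n →₀ ℤ) →₀ ℚ) a ≠ 0 →
      ∀ i : Fin n, ((a i : ℤ) : ZMod 2) = ε i) :
    ∀ S : Finset (Fin n), Even S.card →
      ∀ d : Fin n →₀ ℕ, (P S).coeff d ≠ 0 →
        ∀ i : Fin n, ((d i : ℕ) : ZMod 2) = ε i + (if i ∈ S then 1 else 0) := by
  intro S hS d hd i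
  have hΩ_sym : negX i Ω = ((((ε i).val : ℤ).negOnePow : ℤ) : ℚ) • Ω :=
    AddMonoidAlgebra.twist_eq_smul fun a ha => by
      rw [negOnePowChar_apply, Finsupp.applyAddHom_apply,
        (Int.negOnePow_eq_negOnePow_iff_cast_zmod_two (a i) (ε i).val).2 (by
          rw [Int.cast_natCast, ZMod.natCast_zmod_val]
          exact hΩ a (Finsupp.mem_support_iff.1 ha) i)]
  have hP_sym :=
    hσ.isDecomposition_unique (hσ.isDecomposition_negX hP i) (hΩ_sym ▸ hP.smul _) hS
  have hcoeff := congrArg (MvPolynomial.coeff d) hP_sym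
  simp only [MvPolynomial.coeff_smul, coeff_negZ, smul_eq_mul, ← mul_assoc] at hcoeff
  have hsign := mul_right_cancel₀ hd hcoeff
  rw [← Int.cast_mul, ← Units.val_mul, ← Int.negOnePow_add, Int.cast_inj, Units.val_inj,
    Int.negOnePow_eq_negOnePow_iff_cast_zmod_two] at hsign
  push_cast at hsign
  rw [intCast_expS_apply, ZMod.natCast_zmod_val] at hsign
  rw [← hsign, add_comm, ← add_assoc, CharTwo.add_self_eq_zero, zero_add]

/-- Lemma 4.5(ii), algebraic form: if for each `i` every monomial of `Ω` has `x_i`-exponent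
`≡ ε_i (mod 2)`, then every monomial of each `P_S` (for `S` of even cardinality) has
`z_i`-exponent `≡ ε_i (mod 2)` for `i ∉ S` and `≡ ε_i + 1 (mod 2)` for `i ∈ S`. -/
theorem decomposition_exponent_parity (n : ℕ) (hn : 1 ≤ n)
    (σ : Lam n →+* Lam n) (hσ : IsSigma σ)
    (Ω : Lam n) (P : Finset (Fin n) → MvPolynomial (Fin n) ℚ)
    (hP : IsDecomposition σ Ω P) (ε : Fin n → ZMod 2)
    (hΩ : ∀ a : Fin n →₀ ℤ, (Ω.coeff : (Fin n →₀ ℤ) →₀ ℚ) a ≠ 0 →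
      ∀ i : Fin n, ((a i : ℤ) : ZMod 2) = ε i) :
    ∀ S : Finset (Fin n), Even S.card →
      ∀ d : Fin n →₀ ℕ, (P S).coeff d ≠ 0 →
        ∀ i : Fin n, ((d i : ℕ) : ZMod 2) = ε i + (if i ∈ S then 1 else 0) :=
  decomposition_exponent_parity_general n σ hσ Ω P hP ε hΩ

end
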